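/- arXiv:1012.2538 — 2 statements merged into one kernel-verified Lean document; each statement's English description precedes it below -/
import Mathlib

section
/- Let φ : R → S be a ring homomorphism admitting a retraction ψ : S → R (i.e., ψ ∘ φ = id_R). If S is a PF-ring, then R is a PF-ring. -/
/-- A commutative ring is a PF-ring if every principal ideal is flat. -/
def IsPFRing (R : Type*) [CommRing R] : Prop :=
  ∀ a : R, Module.Flat R (Ideal.span {a})

/-!
Since `span {a} ≅ R ⧸ ann(a)`, a ring is PF iff every annihilator ideal is pure, and an ideal `I`
is pure iff each `x ∈ I` satisfies `x = x * y` for some `y ∈ I`. This elementwise condition on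
`s * a = 0` is pushed from `R` to `S` along `φ`, solved there, and pulled back along `ψ`.
-/

section

variable {R : Type*} [CommRing R]

lemma Ideal.pure_iff_forall_exists_eq_mul (I : Ideal R) :
    I.Pure ↔ ∀ x ∈ I, ∃ y ∈ I, x = x * y := by
  refine ⟨fun _ x hx ↦ exists_eq_mul_of_pure hx, fun h ↦ .of_inf_eq_mul I fun J _ ↦ ?_⟩
  refine le_antisymm (fun x ⟨hxI, hxJ⟩ ↦ ?_) mul_le_inf
  obtain ⟨y, hy, hxy⟩ := h x hxI
  rw [hxy, mul_comm x y]
  exact mul_mem_mul hy hxJ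

lemma Ideal.flat_span_singleton_iff_pure_torsionOf (a : R) :
    Module.Flat R (span {a}) ↔ (torsionOf R R a).Pure :=
  (Module.Flat.equiv_iff (quotTorsionOfEquivSpanSingleton R R a)).symm

lemma isPFRing_iff :
    IsPFRing R ↔ ∀ a s : R, s * a = 0 → ∃ y, y * a = 0 ∧ s = s * y := by
  simp only [IsPFRing, Ideal.flat_span_singleton_iff_pure_torsionOf,
    Ideal.pure_iff_forall_exists_eq_mul, Ideal.mem_torsionOf_iff, smul_eq_mul]

end

theorem retract_isPFRing (R S : Type*) [CommRing R] [CommRing S]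
    (φ : R →+* S) (ψ : S →+* R) (hψφ : ψ.comp φ = RingHom.id R)
    (hS : IsPFRing S) : IsPFRing R := by
  have hψφ' : ∀ r, ψ (φ r) = r := RingHom.congr_fun hψφ
  rw [isPFRing_iff] at hS ⊢
  intro a s hsa
  obtain ⟨y, hya, hsy⟩ := hS (φ a) (φ s) (by rw [← map_mul, hsa, map_zero])
  refine ⟨ψ y, ?_, ?_⟩
  · simpa [hψφ'] using congrArg ψ hya
  · simpa [hψφ'] using congrArg ψ hsy
end

section
/- If the amalgamated duplication R ⋈ I is a PF-ring, then R is a PF-ring. -/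
/-!
The first projection `R ⋈ I → R` is a ring retraction of the diagonal embedding, and the
element-wise criterion for PF-rings passes to retracts: apply it to the images under the section
and pull the witness back along the retraction. The criterion itself is the equational criterion
for flatness, specialised to a principal ideal.
-/

/-- The amalgamated duplication `R ⋈ I` as a subring of `R × R`. -/
def Ideal.duplication {R : Type*} [CommRing R] (I : Ideal R) : Subring (R × R) where
  carrier := {p | p.2 - p.1 ∈ I}
  zero_mem' := by simp
  one_mem' := by simp
  add_mem' := by
    intro a b ha hb
    show (a + b).2 - (a + b).1 ∈ I
    convert I.add_mem ha hb using 1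
    simp only [Prod.fst_add, Prod.snd_add]; ring
  neg_mem' := by
    intro a ha
    show (-a).2 - (-a).1 ∈ I
    convert I.neg_mem ha using 1
    simp only [Prod.fst_neg, Prod.snd_neg]; ring
  mul_mem' := by
    intro a b ha hb
    show (a * b).2 - (a * b).1 ∈ I
    have : (a * b).2 - (a * b).1 = a.2 * (b.2 - b.1) + b.1 * (a.2 - a.1) := by
      simp only [Prod.fst_mul, Prod.snd_mul]; ring
    rw [this]
    exact I.add_mem (I.mul_mem_left _ hb) (I.mul_mem_left _ ha)

/-- The diagonal embedding `R →+* R ⋈ I`. -/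
def Ideal.duplicationDiag {R : Type*} [CommRing R] (I : Ideal R) : R →+* I.duplication where
  toFun r := ⟨(r, r), by show r - r ∈ I; simp⟩
  map_one' := rfl
  map_mul' _ _ := rfl
  map_zero' := rfl
  map_add' _ _ := rfl

namespace Ideal

variable {A : Type*} [CommRing A] {a : A}

theorem flat_span_singleton_iff :
    Module.Flat A (span {a}) ↔ ∀ s : A, s * a = 0 → ∃ α : A, α * s = 0 ∧ a = α * a := by
  have mem (m : span {a}) : ∃ c : A, (m : A) = c * a := by
    obtain ⟨c, hc⟩ := mem_span_singleton'.mp m.2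
    exact ⟨c, hc.symm⟩
  constructor
  · intro _ s hs
    have hrel : ∑ _ : Unit, s • (⟨a, mem_span_singleton_self a⟩ : span {a}) = 0 := by
      ext; simpa using hs
    obtain ⟨k, c, y, hy, hc⟩ := Module.Flat.isTrivialRelation_of_sum_smul_eq_zero hrel
    choose d hd using fun j => mem (y j)
    refine ⟨∑ j, c () j * d j, ?_, ?_⟩
    · simp only [Finset.sum_mul]
      refine Finset.sum_eq_zero fun j _ => ?_
      have hsc : s * c () j = 0 := by simpa using hc j
      linear_combination d j * hsc
    · have := congrArg Subtype.val (hy ())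
      simp only [Submodule.coe_sum, Submodule.coe_smul, hd, smul_eq_mul] at this
      rw [Finset.sum_mul]
      simpa only [mul_assoc] using this
  · intro h
    refine Module.Flat.of_forall_isTrivialRelation fun {l f m} hrel => ?_
    choose c hc using fun i => mem (m i)
    have hsa : (∑ i, f i * c i) * a = 0 := by
      simpa [Finset.sum_mul, hc, mul_assoc] using congrArg Subtype.val hrel
    obtain ⟨α, hα, haα⟩ := h _ hsa
    refine ⟨1, fun i _ => c i * α, fun _ => ⟨a, mem_span_singleton_self a⟩, fun i => ?_, fun _ => ?_⟩
    · ext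
      simp only [Finset.univ_unique, Finset.sum_singleton, Submodule.coe_smul, hc, smul_eq_mul]
      linear_combination c i * haα
    · simp only [← mul_assoc, ← Finset.sum_mul]
      linear_combination hα

def duplicationFst {R : Type*} [CommRing R] (I : Ideal R) : I.duplication →+* R :=
  (RingHom.fst R R).comp I.duplication.subtype

theorem duplicationFst_comp_duplicationDiag {R : Type*} [CommRing R] (I : Ideal R) :
    I.duplicationFst.comp I.duplicationDiag = RingHom.id R :=
  rfl

end Ideal

theorem isPFRing_iff_s16 {A : Type*} [CommRing A] :
    IsPFRing A ↔ ∀ s x : A, s * x = 0 → ∃ α : A, α * s = 0 ∧ x = α * x :=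
  (forall_congr' fun _ => Ideal.flat_span_singleton_iff).trans forall_comm

theorem IsPFRing.of_retraction {A B : Type*} [CommRing A] [CommRing B] (f : A →+* B)
    (g : B →+* A) (hgf : g.comp f = RingHom.id A) (hB : IsPFRing B) : IsPFRing A := by
  rw [isPFRing_iff_s16] at hB ⊢
  intro s x hsx
  obtain ⟨β, hβs, hxβ⟩ := hB (f s) (f x) (by rw [← map_mul, hsx, map_zero])
  have hg (y : A) : g (f y) = y := RingHom.congr_fun hgf y
  refine ⟨g β, ?_, ?_⟩
  · simpa [hg] using congrArg g hβs
  · simpa [hg] using congrArg g hxβ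

theorem duplication_isPFRing_imp_isPFRing (R : Type*) [CommRing R] (I : Ideal R)
    (h : IsPFRing I.duplication) : IsPFRing R :=
  h.of_retraction _ _ I.duplicationFst_comp_duplicationDiag
end
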